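/- Let K be a field and A a K-vector space. For homogeneous multilinear maps φ ∈ HC^{k+1}(A,A), ψ ∈ HC^{m+1}(A,A), χ ∈ HC^{p+1}(A,A) of degrees k, m, p the Gerstenhaber bracket is graded antisymmetric, [φ,ψ] = −(−1)^{km}[ψ,φ], and satisfies the super Jacobi identity [φ,[ψ,χ]] = [[φ,ψ],χ] + (−1)^{km} [ψ,[φ,χ]]; hence (HC(A,A), deg, [·,·]) is a super Lie algebra with respect to the shifted degree. -/
import Mathlib


namespace Stmt3

/-- Insertion of `ψ` (of degree `m`) into `φ` (of degree `k`) after the `i`-th position. -/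
def insertAt {A M : Type*} (k m : ℕ) (i : ℕ)
    (φ : (Fin (k+1) → A) → M) (ψ : (Fin (m+1) → A) → A) :
    (Fin (k+m+1) → A) → M :=
  fun b => φ fun j =>
    if _h1 : (j : ℕ) < i then b ⟨(j : ℕ), by have := j.isLt; omega⟩
    else if _h2 : (j : ℕ) = i then
      ψ fun l => b ⟨i + (l : ℕ), by have := j.isLt; have := l.isLt; omega⟩
    else b ⟨(j : ℕ) + m, by have := j.isLt; omega⟩

/-- The Gerstenhaber product `φ ∘ ψ = ∑ i, (-1)^(i·m) (φ ∘_i ψ)`. -/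
def gprod {A M : Type*} [AddCommGroup M] (k m : ℕ)
    (φ : (Fin (k+1) → A) → M) (ψ : (Fin (m+1) → A) → A) :
    (Fin (k+m+1) → A) → M :=
  fun b => ∑ i : Fin (k+1), ((-1 : ℤ) ^ ((i : ℕ) * m)) • insertAt k m (i : ℕ) φ ψ b

/-- The Gerstenhaber bracket `[φ,ψ] = φ∘ψ - (-1)^(km) ψ∘φ` of cochains of degrees `k` and `m`. -/
def gbracket {A : Type*} [AddCommGroup A] (k m : ℕ)
    (φ : (Fin (k+1) → A) → A) (ψ : (Fin (m+1) → A) → A) :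
    (Fin (k+m+1) → A) → A :=
  fun b => gprod k m φ ψ b
    - ((-1 : ℤ) ^ (k * m)) • gprod m k ψ φ (fun j => b (Fin.cast (by omega) j))

section Helpers

variable {A : Type*} [AddCommGroup A]

/-- composed val-preserving casts vanish -/
lemma cast_cast {n n' : ℕ} (h1 : n' = n) (h2 : n = n') (b : Fin n → A) :
    (fun l : Fin n => b (Fin.cast h1 (Fin.cast h2 l))) = b := by
  funext l; exact congrArg b (Fin.ext rfl)

lemma antisymm_aux (k m : ℕ) (φ : (Fin (k+1) → A) → A) (ψ : (Fin (m+1) → A) → A)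
    (b : Fin (k+m+1) → A) :
    gbracket k m φ ψ b
      = -(((-1 : ℤ) ^ (k * m)) • gbracket m k ψ φ (fun l => b (Fin.cast (by omega) l))) := by
  unfold gbracket
  rw [cast_cast (by omega) (by omega) b]
  rw [smul_sub, neg_sub, smul_smul, ← pow_add, mul_comm m k,
    Even.neg_one_pow ⟨k*m, rfl⟩, one_smul]

end Helpers

section Helpers2
set_option linter.unusedSectionVars false

variable {A : Type*} [AddCommGroup A]

/-- additivity in each slot -/
def SlotAdd {n : ℕ} (f : (Fin n → A) → A) : Prop :=
  ∀ (c : Fin n → A) (i : Fin n) (x y : A),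
    f (Function.update c i (x + y)) = f (Function.update c i x) + f (Function.update c i y)

/-- the slot map as an additive hom -/
def SlotAdd.hom {n : ℕ} {f : (Fin n → A) → A} (hf : SlotAdd f)
    (c : Fin n → A) (i : Fin n) : A →+ A :=
  AddMonoidHom.mk' (fun x => f (Function.update c i x)) (fun x y => hf c i x y)

lemma SlotAdd.hom_apply {n : ℕ} {f : (Fin n → A) → A} (hf : SlotAdd f)
    (c : Fin n → A) (i : Fin n) (x : A) :
    hf.hom c i x = f (Function.update c i x) := rfl

/-- `insertAt` written via `Function.update`, exposing the `ψ`-slot. -/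
lemma insertAt_eq_update {k M : ℕ} (i : ℕ) (hi : i ≤ k)
    (φ : (Fin (k+1) → A) → A) (ψ : (Fin (M+1) → A) → A) (b : Fin (k+M+1) → A) :
    insertAt k M i φ ψ b
      = φ (Function.update
            (fun j : Fin (k+1) =>
              if (j : ℕ) < i then b ⟨(j : ℕ), by have := j.isLt; omega⟩
              else b ⟨(j : ℕ) + M, by have := j.isLt; omega⟩)
            ⟨i, by omega⟩
            (ψ fun l => b ⟨i + (l : ℕ), by have := l.isLt; omega⟩)) := by
  unfold insertAt
  congr 1
  funext j
  by_cases hj : j = (⟨i, by omega⟩ : Fin (k+1))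
  · subst hj
    rw [Function.update_self]
    simp
  · have hj' : (j : ℕ) ≠ i := fun h => hj (Fin.ext h)
    rw [Function.update_of_ne hj]
    rcases lt_or_gt_of_ne hj' with h | h
    · rw [dif_pos h, if_pos h]
    · rw [dif_neg (by omega), dif_neg (by omega), if_neg (by omega)]

/-- right linearity of `insertAt` in the inserted map: finite `ℤ`-combinations. -/
lemma insertAt_right_comb {k M : ℕ} {φ : (Fin (k+1) → A) → A} (hφ : SlotAdd φ)
    (i : ℕ) (hi : i ≤ k) {ι : Type*} (s : Finset ι) (zc : ι → ℤ)
    (G : ι → (Fin (M+1) → A) → A) (b : Fin (k+M+1) → A) :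
    insertAt k M i φ (fun d => ∑ t ∈ s, zc t • G t d) b
      = ∑ t ∈ s, zc t • insertAt k M i φ (G t) b := by
  rw [insertAt_eq_update i hi]
  rw [← hφ.hom_apply, map_sum]
  refine Finset.sum_congr rfl fun t _ => ?_
  rw [map_zsmul, hφ.hom_apply, insertAt_eq_update i hi φ (G t) b]

lemma insertAt_right_sub_zsmul {k M : ℕ} {φ : (Fin (k+1) → A) → A} (hφ : SlotAdd φ)
    (i : ℕ) (hi : i ≤ k) (z : ℤ)
    (Y₁ Y₂ : (Fin (M+1) → A) → A) (b : Fin (k+M+1) → A) :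
    insertAt k M i φ (fun d => Y₁ d - z • Y₂ d) b
      = insertAt k M i φ Y₁ b - z • insertAt k M i φ Y₂ b := by
  rw [insertAt_eq_update i hi]
  rw [← hφ.hom_apply, map_sub, map_zsmul, hφ.hom_apply, hφ.hom_apply,
    insertAt_eq_update i hi φ Y₁ b, insertAt_eq_update i hi φ Y₂ b]

/-- right linearity of `gprod`. -/
lemma gprod_right_sub_zsmul {k M : ℕ} {φ : (Fin (k+1) → A) → A} (hφ : SlotAdd φ)
    (z : ℤ) (Y₁ Y₂ : (Fin (M+1) → A) → A) (b : Fin (k+M+1) → A) :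
    gprod k M φ (fun d => Y₁ d - z • Y₂ d) b
      = gprod k M φ Y₁ b - z • gprod k M φ Y₂ b := by
  unfold gprod
  rw [Finset.smul_sum, ← Finset.sum_sub_distrib]
  refine Finset.sum_congr rfl fun i _ => ?_
  rw [insertAt_right_sub_zsmul hφ (i : ℕ) (by omega) z Y₁ Y₂ b,
    smul_sub, smul_comm ((-1:ℤ)^((i:ℕ)*M)) z]

/-- left linearity of `gprod` (pointwise, no hypotheses). -/
lemma gprod_left_sub_zsmul {k M : ℕ} (z : ℤ)
    (X₁ X₂ : (Fin (k+1) → A) → A) (ψ : (Fin (M+1) → A) → A) (b : Fin (k+M+1) → A) :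
    gprod k M (fun c => X₁ c - z • X₂ c) ψ b
      = gprod k M X₁ ψ b - z • gprod k M X₂ ψ b := by
  unfold gprod insertAt
  rw [Finset.smul_sum, ← Finset.sum_sub_distrib]
  refine Finset.sum_congr rfl fun i _ => ?_
  rw [smul_sub, smul_comm ((-1:ℤ)^((i:ℕ)*M)) z]

/-- cast lemmas -/
lemma gprod_cast_right {k m m' : ℕ} (hm : m' = m)
    (φ : (Fin (k+1) → A) → A) (g : (Fin (m'+1) → A) → A)
    (hm1 : m'+1 = m+1) (hb : k+m'+1 = k+m+1) (b : Fin (k+m+1) → A) :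
    gprod k m φ (fun d => g fun l => d (Fin.cast hm1 l)) b
      = gprod k m' φ g (fun r => b (Fin.cast hb r)) := by
  subst hm; rfl

lemma gprod_cast_left {k k' m : ℕ} (hk : k' = k)
    (f : (Fin (k'+1) → A) → A) (ψ : (Fin (m+1) → A) → A)
    (hk1 : k'+1 = k+1) (hb : k'+m+1 = k+m+1) (b : Fin (k+m+1) → A) :
    gprod k m (fun c => f fun l => c (Fin.cast hk1 l)) ψ b
      = gprod k' m f ψ (fun r => b (Fin.cast hb r)) := by
  subst hk; rfl


lemma insert_insert_mid {k m p : ℕ} (i t : ℕ) (hi : i ≤ k) (ht : t ≤ m)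
    (φ : (Fin (k+1) → A) → A) (ψ : (Fin (m+1) → A) → A) (χ : (Fin (p+1) → A) → A)
    (h₁ : k+(m+p)+1 = k+m+p+1) (b : Fin (k+m+p+1) → A) :
    insertAt (k+m) p (i+t) (insertAt k m i φ ψ) χ b
      = insertAt k (m+p) i φ (insertAt m p t ψ χ) (fun l => b (Fin.cast h₁ l)) := by
  simp only [insertAt]
  congr 1
  funext j
  have hjlt := j.isLt
  split_ifs <;> simp_all <;> try omega
  all_goals
    first
    | (congr 1 ; simp only [Fin.mk.injEq] ; omega)
    | (congr 1 ; funext l ; split_ifs <;>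
        first
        | rfl
        | omega
        | (congr 1 ; simp only [Fin.mk.injEq] ; omega)
        | (congr 1 ; funext q ; congr 1 ; simp only [Fin.mk.injEq] ; omega))

lemma insert_insert_disjoint {k m p : ℕ} (i j : ℕ) (hij : i < j) (hj : j ≤ k)
    (φ : (Fin (k+1) → A) → A) (ψ : (Fin (m+1) → A) → A) (χ : (Fin (p+1) → A) → A)
    (h₂ : k+p+m+1 = k+m+p+1) (b : Fin (k+m+p+1) → A) :
    insertAt (k+m) p (j+m) (insertAt k m i φ ψ) χ b
      = insertAt (k+p) m i (insertAt k p j φ χ) ψ (fun l => b (Fin.cast h₂ l)) := by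
  simp only [insertAt]
  congr 1
  funext q
  have hqlt := q.isLt
  split_ifs <;> simp_all <;> try omega
  all_goals
    first
    | (congr 1 ; simp only [Fin.mk.injEq] ; omega)
    | (congr 1 ; funext l ; split_ifs <;>
        first
        | rfl
        | omega
        | (congr 1 ; simp only [Fin.mk.injEq] ; omega)
        | (congr 1 ; funext r ; congr 1 ; simp only [Fin.mk.injEq] ; omega))

def offdiag (n : ℕ) : Finset (ℕ × ℕ) :=
  (Finset.range n ×ˢ Finset.range n).filter (fun q => q.1 ≠ q.2)

lemma mem_offdiag {n : ℕ} {q : ℕ × ℕ} :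
    q ∈ offdiag n ↔ q.1 < n ∧ q.2 < n ∧ q.1 ≠ q.2 := by
  simp [offdiag, Finset.mem_filter, Finset.mem_product, and_assoc]

lemma offdiag_swap (n : ℕ) (F : ℕ → ℕ → A) :
    ∑ q ∈ offdiag n, F q.1 q.2 = ∑ q ∈ offdiag n, F q.2 q.1 := by
  have : offdiag n = Finset.map (Equiv.prodComm ℕ ℕ).toEmbedding (offdiag n) := by
    ext q
    simp only [Finset.mem_map_equiv, mem_offdiag, Equiv.prodComm_symm, Equiv.prodComm_apply,
      Prod.fst_swap, Prod.snd_swap, ne_eq]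
    tauto
  conv_lhs => rw [this, Finset.sum_map]
  rfl

lemma offdiag_split (x : ℕ) (F : ℕ → ℕ → A) :
    ∑ q ∈ offdiag (x+1), F q.1 q.2
      = ∑ i ∈ Finset.range (x+1),
          ((∑ j ∈ Finset.range i, F i j) + ∑ j ∈ Finset.range (x-i), F i (i+1+j)) := by
  rw [offdiag, Finset.sum_filter, Finset.sum_product]
  refine Finset.sum_congr rfl fun i hi => ?_
  have hi' : i ≤ x := by
    have := Finset.mem_range.mp hi; omega
  rw [show x+1 = i + (1 + (x-i)) by omega, Finset.sum_range_add, Finset.sum_range_add,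
    Finset.sum_range_one]
  have e0 : (if i ≠ i + 0 then F i (i+0) else 0) = 0 := by simp
  rw [e0, zero_add]
  congr 1
  · refine Finset.sum_congr rfl fun j hj => ?_
    have := Finset.mem_range.mp hj
    rw [if_pos (by omega)]
  · refine Finset.sum_congr rfl fun j hj => ?_
    rw [if_pos (by omega), show i + (1 + j) = i+1+j by omega]

lemma sgn_congr {e e' : ℕ} (h : e = e') (v : A) : (-1:ℤ)^e • v = (-1:ℤ)^e' • v := by
  subst h; rfl

lemma key {x y z : ℕ} (f : (Fin (x+1) → A) → A) (hf : SlotAdd f)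
    (g : (Fin (y+1) → A) → A) (h : (Fin (z+1) → A) → A)
    (h₁ : x+(y+z)+1 = x+y+z+1) (b : Fin (x+y+z+1) → A) :
    gprod (x+y) z (gprod x y f g) h b
      = gprod x (y+z) f (gprod y z g h) (fun l => b (Fin.cast h₁ l))
        + ∑ q ∈ offdiag (x+1),
            ((-1:ℤ)^(q.1*y+q.2*z + if q.1 < q.2 then y*z else 0) •
              insertAt (x+y) z (if q.1 < q.2 then q.2+y else q.2)
                (insertAt x y q.1 f g) h b) := by
  -- Step 1: LHS as a double sum over ranges
  have lhs1 : gprod (x+y) z (gprod x y f g) h b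
      = ∑ i ∈ Finset.range (x+1), ∑ J ∈ Finset.range (x+y+1),
          (-1:ℤ)^(i*y+J*z) • insertAt (x+y) z J (insertAt x y i f g) h b := by
    calc gprod (x+y) z (gprod x y f g) h b
        = ∑ J : Fin (x+y+1), (-1:ℤ)^((J:ℕ)*z) •
            ∑ i : Fin (x+1), (-1:ℤ)^((i:ℕ)*y) •
              insertAt (x+y) z (J:ℕ) (insertAt x y (i:ℕ) f g) h b := rfl
      _ = ∑ J : Fin (x+y+1), ∑ i : Fin (x+1),
            (-1:ℤ)^((i:ℕ)*y+(J:ℕ)*z) •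
              insertAt (x+y) z (J:ℕ) (insertAt x y (i:ℕ) f g) h b := by
          refine Finset.sum_congr rfl fun J _ => ?_
          rw [Finset.smul_sum]
          refine Finset.sum_congr rfl fun i _ => ?_
          rw [smul_smul, ← pow_add]
          exact sgn_congr (by ring)
              (insertAt (x+y) z (J:ℕ) (insertAt x y (i:ℕ) f g) h b)
      _ = ∑ J ∈ Finset.range (x+y+1), ∑ i ∈ Finset.range (x+1),
            (-1:ℤ)^(i*y+J*z) • insertAt (x+y) z J (insertAt x y i f g) h b := by
          rw [Fin.sum_univ_eq_sum_range (fun J => ∑ i : Fin (x+1),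
            (-1:ℤ)^((i:ℕ)*y+J*z) • insertAt (x+y) z J (insertAt x y (i:ℕ) f g) h b)]
          refine Finset.sum_congr rfl fun J _ => ?_
          rw [Fin.sum_univ_eq_sum_range (fun i =>
            (-1:ℤ)^(i*y+J*z) • insertAt (x+y) z J (insertAt x y i f g) h b)]
      _ = _ := Finset.sum_comm
  -- Step 2: middle part is the nested product
  have mid : gprod x (y+z) f (gprod y z g h) (fun l => b (Fin.cast h₁ l))
      = ∑ i ∈ Finset.range (x+1), ∑ t ∈ Finset.range (y+1),
          (-1:ℤ)^(i*y+(i+t)*z) •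
            insertAt (x+y) z (i+t) (insertAt x y i f g) h b := by
    calc gprod x (y+z) f (gprod y z g h) (fun l => b (Fin.cast h₁ l))
        = ∑ i : Fin (x+1), (-1:ℤ)^((i:ℕ)*(y+z)) •
            insertAt x (y+z) (i:ℕ) f
              (fun d => ∑ t : Fin (y+1), (-1:ℤ)^((t:ℕ)*z) • insertAt y z (t:ℕ) g h d)
              (fun l => b (Fin.cast h₁ l)) := rfl
      _ = ∑ i : Fin (x+1), ∑ t : Fin (y+1),
            (-1:ℤ)^((i:ℕ)*y+((i:ℕ)+(t:ℕ))*z) •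
              insertAt x (y+z) (i:ℕ) f (insertAt y z (t:ℕ) g h)
                (fun l => b (Fin.cast h₁ l)) := by
          refine Finset.sum_congr rfl fun i _ => ?_
          rw [insertAt_right_comb hf (i:ℕ) (by omega) Finset.univ
            (fun t : Fin (y+1) => (-1:ℤ)^((t:ℕ)*z)) (fun t => insertAt y z (t:ℕ) g h)]
          rw [Finset.smul_sum]
          refine Finset.sum_congr rfl fun t _ => ?_
          rw [smul_smul, ← pow_add]
          exact sgn_congr (by ring) _
      _ = ∑ i ∈ Finset.range (x+1), ∑ t ∈ Finset.range (y+1),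
            (-1:ℤ)^(i*y+(i+t)*z) •
              insertAt x (y+z) i f (insertAt y z t g h) (fun l => b (Fin.cast h₁ l)) := by
          rw [Fin.sum_univ_eq_sum_range (fun i => ∑ t : Fin (y+1),
            (-1:ℤ)^(i*y+(i+(t:ℕ))*z) •
              insertAt x (y+z) i f (insertAt y z (t:ℕ) g h) (fun l => b (Fin.cast h₁ l)))]
          refine Finset.sum_congr rfl fun i _ => ?_
          rw [Fin.sum_univ_eq_sum_range (fun t =>
            (-1:ℤ)^(i*y+(i+t)*z) •
              insertAt x (y+z) i f (insertAt y z t g h) (fun l => b (Fin.cast h₁ l)))]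
      _ = _ := by
          refine Finset.sum_congr rfl fun i hi => Finset.sum_congr rfl fun t ht => ?_
          rw [insert_insert_mid i t (by have := Finset.mem_range.mp hi; omega)
            (by have := Finset.mem_range.mp ht; omega) f g h h₁ b]
  -- Step 3: split the double sum
  rw [lhs1, mid, offdiag_split x (fun a c =>
    (-1:ℤ)^(a*y+c*z + if a < c then y*z else 0) •
      insertAt (x+y) z (if a < c then c+y else c) (insertAt x y a f g) h b),
    ← Finset.sum_add_distrib]
  refine Finset.sum_congr rfl fun i hi => ?_
  have hi' : i ≤ x := by have := Finset.mem_range.mp hi; omega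
  rw [show Finset.range (x+y+1) = Finset.range (i + ((y+1) + (x-i))) from
      congrArg _ (by omega),
    Finset.sum_range_add, Finset.sum_range_add]
  have elow : ∑ j ∈ Finset.range i,
        (-1:ℤ)^(i*y+j*z) • insertAt (x+y) z j (insertAt x y i f g) h b
      = ∑ j ∈ Finset.range i,
        (-1:ℤ)^(i*y+j*z + if i < j then y*z else 0) •
          insertAt (x+y) z (if i < j then j+y else j) (insertAt x y i f g) h b := by
    refine Finset.sum_congr rfl fun j hj => ?_
    have hj' := Finset.mem_range.mp hj
    rw [if_neg (by omega), if_neg (by omega)]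
    exact sgn_congr (by ring) _
  have ehigh : ∑ j ∈ Finset.range (x-i),
        (-1:ℤ)^(i*y+(i+(y+1+j))*z) •
          insertAt (x+y) z (i+(y+1+j)) (insertAt x y i f g) h b
      = ∑ j ∈ Finset.range (x-i),
        (-1:ℤ)^(i*y+(i+1+j)*z + if i < i+1+j then y*z else 0) •
          insertAt (x+y) z (if i < i+1+j then (i+1+j)+y else (i+1+j))
            (insertAt x y i f g) h b := by
    refine Finset.sum_congr rfl fun j hj => ?_
    rw [if_pos (by omega), if_pos (by omega),
      show i+(y+1+j) = i+1+j+y by omega]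
    exact sgn_congr (by ring) _
  rw [elow, ehigh]
  exact add_left_comm _ _ _

lemma neg_one_pow_sub2 (e c : ℕ) (v : A) : (-1:ℤ)^(e+2*c) • v = (-1:ℤ)^e • v := by
  rw [pow_add, pow_mul, neg_one_sq, one_pow, mul_one]

lemma preLie {x y z : ℕ} (f : (Fin (x+1) → A) → A) (hf : SlotAdd f)
    (g : (Fin (y+1) → A) → A) (h : (Fin (z+1) → A) → A)
    (h₁ : x+(y+z)+1 = x+y+z+1) (h₂ : x+z+y+1 = x+y+z+1) (h₄ : x+(z+y)+1 = x+y+z+1)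
    (b : Fin (x+y+z+1) → A) :
    gprod (x+y) z (gprod x y f g) h b
      - gprod x (y+z) f (gprod y z g h) (fun l => b (Fin.cast h₁ l))
    = (-1:ℤ)^(y*z) •
      (gprod (x+z) y (gprod x z f h) g (fun l => b (Fin.cast h₂ l))
        - gprod x (z+y) f (gprod z y h g) (fun l => b (Fin.cast h₄ l))) := by
  have h₃ : x+(z+y)+1 = x+z+y+1 := by omega
  have h₂' : x+y+z+1 = x+z+y+1 := by omega
  rw [key f hf g h h₁ b, add_sub_cancel_left]
  have K2 := key (x := x) (y := z) (z := y) f hf h g h₃ (fun l => b (Fin.cast h₂ l))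
  have ecast : (fun l : Fin (x+(z+y)+1) => b (Fin.cast h₂ (Fin.cast h₃ l)))
      = (fun l => b (Fin.cast h₄ l)) := funext fun l => congrArg b (Fin.ext rfl)
  rw [ecast] at K2
  rw [K2, add_sub_cancel_left]
  rw [offdiag_swap (x+1) (fun a c =>
    (-1:ℤ)^(a*z+c*y + if a < c then z*y else 0) •
      insertAt (x+z) y (if a < c then c+z else c)
        (insertAt x z a f h) g (fun l => b (Fin.cast h₂ l)))]
  rw [Finset.smul_sum]
  refine Finset.sum_congr rfl fun q hq => ?_
  obtain ⟨hq1, hq2, hne⟩ := mem_offdiag.mp hq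
  rcases lt_or_gt_of_ne hne with hlt | hgt
  · rw [if_pos hlt, if_pos hlt, if_neg (by omega), if_neg (by omega)]
    rw [insert_insert_disjoint q.1 q.2 hlt (by omega) f g h h₂ b]
    rw [smul_smul, ← pow_add]
    exact sgn_congr (by ring) _
  · rw [if_neg (by omega), if_neg (by omega), if_pos hgt, if_pos hgt]
    have K3 := insert_insert_disjoint (k := x) (m := z) (p := y) q.2 q.1 hgt (by omega)
      f h g h₂' (fun l => b (Fin.cast h₂ l))
    rw [show (fun l : Fin (x+y+z+1) =>
        (fun l' : Fin (x+z+y+1) => b (Fin.cast h₂ l')) (Fin.cast h₂' l)) = b from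
      funext fun l => congrArg b (Fin.ext rfl)] at K3
    rw [← K3, smul_smul, ← pow_add]
    exact ((neg_one_pow_sub2 (q.1*y+q.2*z+0) (y*z) _).symm.trans (sgn_congr (by ring) _))

lemma collapse {n1 n2 n3 : ℕ} (hA : n2 = n3) (hB : n1 = n2) (hC : n1 = n3)
    (b : Fin n3 → A) :
    (fun l : Fin n1 => b (Fin.cast hA (Fin.cast hB l))) = fun l => b (Fin.cast hC l) :=
  funext fun l => congrArg b (Fin.ext rfl)

lemma jacobi_core (k m p : ℕ) (A1 A2 A3 A4 A5 A6 A7 A8 A9 A10 A11 A12 : A)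
    (P1 : A1 - A2 = (-1:ℤ)^(m*p) • (A3 - A4))
    (P2 : A5 - A6 = (-1:ℤ)^(k*p) • (A7 - A8))
    (P3 : A9 - A10 = (-1:ℤ)^(k*m) • (A11 - A12)) :
    (A2 - (-1:ℤ)^(m*p) • A4)
      - ((-1:ℤ)^(k*m) * (-1:ℤ)^(k*p)) • (A7 - (-1:ℤ)^(m*p) • A11)
    = ((A1 - (-1:ℤ)^(k*m) • A5)
        - ((-1:ℤ)^(k*p) * (-1:ℤ)^(m*p)) • (A10 - (-1:ℤ)^(k*m) • A12))
      + (-1:ℤ)^(k*m) •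
        ((A6 - (-1:ℤ)^(k*p) • A8)
          - ((-1:ℤ)^(k*m) * (-1:ℤ)^(m*p)) • (A3 - (-1:ℤ)^(k*p) • A9)) := by
  rw [sub_eq_iff_eq_add] at P1 P2 P3
  rw [P1, P2, P3]
  rcases Nat.even_or_odd (k*m) with e1 | e1 <;>
    rcases Nat.even_or_odd (k*p) with e2 | e2 <;>
      rcases Nat.even_or_odd (m*p) with e3 | e3 <;>
        simp only [e1.neg_one_pow, e2.neg_one_pow, e3.neg_one_pow, one_smul, neg_smul,
          smul_sub, smul_add, smul_neg, neg_neg, one_mul, mul_one, neg_one_mul, mul_neg] <;>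
        abel

end Helpers2


/-- Graded antisymmetry `[φ,ψ] = −(−1)^{km}[ψ,φ]` and the super Jacobi
identity `[φ,[ψ,χ]] = [[φ,ψ],χ] + (−1)^{km}[ψ,[φ,χ]]` of the Gerstenhaber bracket, for
homogeneous multilinear maps of degrees `k`, `m`, `p`; hence `(HC(A,A), deg, [·,·])` is a
super Lie algebra with respect to the shifted degree. -/
theorem gbracket_antisymm_and_super_jacobi {K A : Type*} [Field K]
    [AddCommGroup A] [Module K A]
    (k m p : ℕ)
    (φ : MultilinearMap K (fun _ : Fin (k+1) => A) A)
    (ψ : MultilinearMap K (fun _ : Fin (m+1) => A) A)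
    (χ : MultilinearMap K (fun _ : Fin (p+1) => A) A) :
    (∀ b : Fin (k+m+1) → A,
      gbracket k m ⇑φ ⇑ψ b
        = -(((-1 : ℤ) ^ (k * m)) • gbracket m k ⇑ψ ⇑φ (fun l => b (Fin.cast (by omega) l))))
    ∧ (∀ b : Fin (k+m+p+1) → A,
      gbracket k (m+p) ⇑φ (gbracket m p ⇑ψ ⇑χ) (fun l => b (Fin.cast (by omega) l))
        = gbracket (k+m) p (gbracket k m ⇑φ ⇑ψ) ⇑χ b
          + ((-1 : ℤ) ^ (k * m)) •
              gbracket m (k+p) ⇑ψ (gbracket k p ⇑φ ⇑χ) (fun l => b (Fin.cast (by omega) l))) := by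
  have hφS : SlotAdd (A := A) ⇑φ := fun c i x y => φ.map_update_add c i x y
  have hψS : SlotAdd (A := A) ⇑ψ := fun c i x y => ψ.map_update_add c i x y
  have hχS : SlotAdd (A := A) ⇑χ := fun c i x y => χ.map_update_add c i x y
  refine ⟨fun b => antisymm_aux k m ⇑φ ⇑ψ b, fun b => ?_⟩
  have c1 : k+(m+p)+1 = k+m+p+1 := by omega
  have c2 : k+p+m+1 = k+m+p+1 := by omega
  have c3 : k+(p+m)+1 = k+m+p+1 := by omega
  have c4 : m+k+p+1 = k+m+p+1 := by omega
  have c5 : m+(k+p)+1 = k+m+p+1 := by omega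
  have c6 : m+p+k+1 = k+m+p+1 := by omega
  have c7 : m+(p+k)+1 = k+m+p+1 := by omega
  have c8 : p+k+m+1 = k+m+p+1 := by omega
  have c9 : p+(k+m)+1 = k+m+p+1 := by omega
  have c10 : p+m+k+1 = k+m+p+1 := by omega
  have c11 : p+(m+k)+1 = k+m+p+1 := by omega
  -- the twelve atoms
  set A1 := gprod (k+m) p (gprod k m ⇑φ ⇑ψ) ⇑χ b with hA1
  set A2 := gprod k (m+p) ⇑φ (gprod m p ⇑ψ ⇑χ) (fun l => b (Fin.cast c1 l)) with hA2
  set A3 := gprod (k+p) m (gprod k p ⇑φ ⇑χ) ⇑ψ (fun l => b (Fin.cast c2 l)) with hA3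
  set A4 := gprod k (p+m) ⇑φ (gprod p m ⇑χ ⇑ψ) (fun l => b (Fin.cast c3 l)) with hA4
  set A5 := gprod (m+k) p (gprod m k ⇑ψ ⇑φ) ⇑χ (fun l => b (Fin.cast c4 l)) with hA5
  set A6 := gprod m (k+p) ⇑ψ (gprod k p ⇑φ ⇑χ) (fun l => b (Fin.cast c5 l)) with hA6
  set A7 := gprod (m+p) k (gprod m p ⇑ψ ⇑χ) ⇑φ (fun l => b (Fin.cast c6 l)) with hA7
  set A8 := gprod m (p+k) ⇑ψ (gprod p k ⇑χ ⇑φ) (fun l => b (Fin.cast c7 l)) with hA8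
  set A9 := gprod (p+k) m (gprod p k ⇑χ ⇑φ) ⇑ψ (fun l => b (Fin.cast c8 l)) with hA9
  set A10 := gprod p (k+m) ⇑χ (gprod k m ⇑φ ⇑ψ) (fun l => b (Fin.cast c9 l)) with hA10
  set A11 := gprod (p+m) k (gprod p m ⇑χ ⇑ψ) ⇑φ (fun l => b (Fin.cast c10 l)) with hA11
  set A12 := gprod p (m+k) ⇑χ (gprod m k ⇑ψ ⇑φ) (fun l => b (Fin.cast c11 l)) with hA12
  -- the three pre-Lie identities
  have P1 : A1 - A2 = (-1:ℤ)^(m*p) • (A3 - A4) := by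
    rw [hA1, hA2, hA3, hA4]
    exact preLie (x := k) (y := m) (z := p) ⇑φ hφS ⇑ψ ⇑χ c1 c2 c3 b
  have P2 : A5 - A6 = (-1:ℤ)^(k*p) • (A7 - A8) := by
    have h₁ : m+(k+p)+1 = m+k+p+1 := by omega
    have h₂ : m+p+k+1 = m+k+p+1 := by omega
    have h₄ : m+(p+k)+1 = m+k+p+1 := by omega
    have T := preLie (x := m) (y := k) (z := p) ⇑ψ hψS ⇑φ ⇑χ h₁ h₂ h₄
      (fun l => b (Fin.cast c4 l))
    rw [collapse c4 h₁ c5 b, collapse c4 h₂ c6 b, collapse c4 h₄ c7 b] at T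
    rw [hA5, hA6, hA7, hA8]
    exact T
  have P3 : A9 - A10 = (-1:ℤ)^(k*m) • (A11 - A12) := by
    have h₁ : p+(k+m)+1 = p+k+m+1 := by omega
    have h₂ : p+m+k+1 = p+k+m+1 := by omega
    have h₄ : p+(m+k)+1 = p+k+m+1 := by omega
    have T := preLie (x := p) (y := k) (z := m) ⇑χ hχS ⇑φ ⇑ψ h₁ h₂ h₄
      (fun l => b (Fin.cast c8 l))
    rw [collapse c8 h₁ c9 b, collapse c8 h₂ c10 b, collapse c8 h₄ c11 b] at T
    rw [hA9, hA10, hA11, hA12]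
    exact T
  -- expansion of the left-hand side
  have pf_a : p+m+1 = m+p+1 := by omega
  have eL : gbracket k (m+p) ⇑φ (gbracket m p ⇑ψ ⇑χ) (fun l => b (Fin.cast c1 l))
      = (A2 - (-1:ℤ)^(m*p) • A4)
        - ((-1:ℤ)^(k*m) * (-1:ℤ)^(k*p)) • (A7 - (-1:ℤ)^(m*p) • A11) := by
    have pf_b : m+p+k+1 = k+(m+p)+1 := by omega
    have hb1 : k+(p+m)+1 = k+(m+p)+1 := by omega
    have hb2 : p+m+k+1 = m+p+k+1 := by omega
    have step0 : gbracket k (m+p) ⇑φ (gbracket m p ⇑ψ ⇑χ) (fun l => b (Fin.cast c1 l))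
        = gprod k (m+p) ⇑φ
            (fun d => gprod m p ⇑ψ ⇑χ d
              - (-1:ℤ)^(m*p) • gprod p m ⇑χ ⇑ψ (fun j => d (Fin.cast pf_a j)))
            (fun l => b (Fin.cast c1 l))
          - (-1:ℤ)^(k*(m+p)) •
            gprod (m+p) k
              (fun c => gprod m p ⇑ψ ⇑χ c
                - (-1:ℤ)^(m*p) • gprod p m ⇑χ ⇑ψ (fun j => c (Fin.cast pf_a j)))
              ⇑φ (fun j => b (Fin.cast c1 (Fin.cast pf_b j))) := rfl
    rw [step0, gprod_right_sub_zsmul hφS, gprod_left_sub_zsmul,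
      gprod_cast_right (show p+m = m+p by omega) ⇑φ (gprod p m ⇑χ ⇑ψ) pf_a hb1
        (fun l => b (Fin.cast c1 l)),
      collapse c1 hb1 c3 b,
      collapse c1 pf_b c6 b,
      gprod_cast_left (show p+m = m+p by omega) (gprod p m ⇑χ ⇑ψ) ⇑φ pf_a hb2
        (fun l => b (Fin.cast c6 l)),
      collapse c6 hb2 c10 b,
      show ((-1:ℤ))^(k*(m+p)) = (-1:ℤ)^(k*m) * (-1:ℤ)^(k*p) by
        rw [show k*(m+p) = k*m + k*p by ring, pow_add]]
  -- expansion of the first bracket on the right-hand side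
  have pf_c : m+k+1 = k+m+1 := by omega
  have eR1 : gbracket (k+m) p (gbracket k m ⇑φ ⇑ψ) ⇑χ b
      = (A1 - (-1:ℤ)^(k*m) • A5)
        - ((-1:ℤ)^(k*p) * (-1:ℤ)^(m*p)) • (A10 - (-1:ℤ)^(k*m) • A12) := by
    have hb3 : m+k+p+1 = k+m+p+1 := by omega
    have hb4 : p+(m+k)+1 = p+(k+m)+1 := by omega
    have step0 : gbracket (k+m) p (gbracket k m ⇑φ ⇑ψ) ⇑χ b
        = gprod (k+m) p
            (fun c => gprod k m ⇑φ ⇑ψ c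
              - (-1:ℤ)^(k*m) • gprod m k ⇑ψ ⇑φ (fun j => c (Fin.cast pf_c j)))
            ⇑χ b
          - (-1:ℤ)^((k+m)*p) •
            gprod p (k+m) ⇑χ
              (fun d => gprod k m ⇑φ ⇑ψ d
                - (-1:ℤ)^(k*m) • gprod m k ⇑ψ ⇑φ (fun j => d (Fin.cast pf_c j)))
              (fun l => b (Fin.cast c9 l)) := rfl
    rw [step0, gprod_left_sub_zsmul, gprod_right_sub_zsmul hχS,
      gprod_cast_left (show m+k = k+m by omega) (gprod m k ⇑ψ ⇑φ) ⇑χ pf_c hb3 b,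
      gprod_cast_right (show m+k = k+m by omega) ⇑χ (gprod m k ⇑ψ ⇑φ) pf_c hb4
        (fun l => b (Fin.cast c9 l)),
      collapse c9 hb4 c11 b,
      show ((-1:ℤ))^((k+m)*p) = (-1:ℤ)^(k*p) * (-1:ℤ)^(m*p) by
        rw [show (k+m)*p = k*p + m*p by ring, pow_add]]
  -- expansion of the second bracket on the right-hand side
  have pf_f : p+k+1 = k+p+1 := by omega
  have eR2 : gbracket m (k+p) ⇑ψ (gbracket k p ⇑φ ⇑χ) (fun l => b (Fin.cast c5 l))
      = (A6 - (-1:ℤ)^(k*p) • A8)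
        - ((-1:ℤ)^(k*m) * (-1:ℤ)^(m*p)) • (A3 - (-1:ℤ)^(k*p) • A9) := by
    have pf_g : k+p+m+1 = m+(k+p)+1 := by omega
    have hb5 : m+(p+k)+1 = m+(k+p)+1 := by omega
    have hb6 : p+k+m+1 = k+p+m+1 := by omega
    have step0 : gbracket m (k+p) ⇑ψ (gbracket k p ⇑φ ⇑χ) (fun l => b (Fin.cast c5 l))
        = gprod m (k+p) ⇑ψ
            (fun d => gprod k p ⇑φ ⇑χ d
              - (-1:ℤ)^(k*p) • gprod p k ⇑χ ⇑φ (fun j => d (Fin.cast pf_f j)))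
            (fun l => b (Fin.cast c5 l))
          - (-1:ℤ)^(m*(k+p)) •
            gprod (k+p) m
              (fun c => gprod k p ⇑φ ⇑χ c
                - (-1:ℤ)^(k*p) • gprod p k ⇑χ ⇑φ (fun j => c (Fin.cast pf_f j)))
              ⇑ψ (fun j => b (Fin.cast c5 (Fin.cast pf_g j))) := rfl
    rw [step0, gprod_right_sub_zsmul hψS, gprod_left_sub_zsmul,
      gprod_cast_right (show p+k = k+p by omega) ⇑ψ (gprod p k ⇑χ ⇑φ) pf_f hb5
        (fun l => b (Fin.cast c5 l)),
      collapse c5 hb5 c7 b,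
      collapse c5 pf_g c2 b,
      gprod_cast_left (show p+k = k+p by omega) (gprod p k ⇑χ ⇑φ) ⇑ψ pf_f hb6
        (fun l => b (Fin.cast c2 l)),
      collapse c2 hb6 c8 b,
      show ((-1:ℤ))^(m*(k+p)) = (-1:ℤ)^(k*m) * (-1:ℤ)^(m*p) by
        rw [show m*(k+p) = k*m + m*p by ring, pow_add]]
  rw [eL, eR1, eR2]
  exact jacobi_core k m p A1 A2 A3 A4 A5 A6 A7 A8 A9 A10 A11 A12 P1 P2 P3


end Stmt3
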